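/- Let φ̂_k(x) = T_k(x) − T_{k+2}(x) and φ̃_k(x) = T_k(x) − (2(k+2)/(k+3)) T_{k+2}(x) + ((k+1)/(k+3)) T_{k+4}(x). For all j, k ∈ ℕ the mixed mass matrix entries M̃_{kj} = ⟨φ̂_j, φ̃_k⟩_σ satisfy: M̃_{kj} = −π/2 if j = k−2; M̃_{kk} = (π/2)(c_k + 2(k+2)/(k+3)); M̃_{k,k+2} = −(π/2)(2(k+2)/(k+3) + (k+1)/(k+3)); M̃_{k,k+4} = (π/2)(k+1)/(k+3); and M̃_{kj} = 0 otherwise. -/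

import Mathlib

open Real Polynomial

/-- The k-th Chebyshev polynomial of the first kind, as a real polynomial. -/
noncomputable def chebT (n : ℕ) : Polynomial ℝ := Polynomial.Chebyshev.T ℝ (n : ℤ)

/-- The Chebyshev-weighted inner product `⟨f,g⟩_σ = ∫_{-1}^{1} f g (1-x²)^{-1/2} dx`. -/
noncomputable def chebInner (f g : Polynomial ℝ) : ℝ :=
  ∫ x in (-1:ℝ)..1, f.eval x * g.eval x / Real.sqrt (1 - x ^ 2)

/-- Shen's Dirichlet basis function `φ̂_k = T_k − T_{k+2}`. -/
noncomputable def shenD (k : ℕ) : Polynomial ℝ := chebT k - chebT (k + 2)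

/-- Shen's biharmonic basis function
`φ̃_k = T_k − (2(k+2)/(k+3)) T_{k+2} + ((k+1)/(k+3)) T_{k+4}`. -/
noncomputable def shenB (k : ℕ) : Polynomial ℝ :=
  chebT k - Polynomial.C ((2 * ((k : ℝ) + 2)) / ((k : ℝ) + 3)) * chebT (k + 2)
    + Polynomial.C (((k : ℝ) + 1) / ((k : ℝ) + 3)) * chebT (k + 4)

/-- `c_0 = 2`, `c_k = 1` for `k ≥ 1`. -/
noncomputable def cCoef (k : ℕ) : ℝ := if k = 0 then 2 else 1

/-! Under `x = cos θ` the weight `(1 - x²)^{-1/2}` becomes Mathlib's `measureT`, for which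
`⟨T_m, T_n⟩_σ = (π/2) c_m δ_{mn}` is known. Expanding `φ̂_j` and `φ̃_k` bilinearly writes `M̃_{kj}`
as a combination of six such entries, and the Kronecker deltas leave only the four diagonals. -/

open Polynomial.Chebyshev MeasureTheory

lemma chebInner_eq_integral_measureT (f g : ℝ[X]) :
    chebInner f g = ∫ x, f.eval x * g.eval x ∂measureT := by
  simp [chebInner, integral_measureT, div_eq_mul_inv]

noncomputable def measureTIntegral : ℝ[X] →ₗ[ℝ] ℝ where
  toFun p := ∫ x, p.eval x ∂measureT
  map_add' p q := by
    simp only [eval_add]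
    exact integral_add (integrable_measureT p.continuousOn) (integrable_measureT q.continuousOn)
  map_smul' c p := by simp [integral_const_mul]

noncomputable def chebForm : LinearMap.BilinForm ℝ ℝ[X] :=
  (LinearMap.mul ℝ ℝ[X]).compr₂ measureTIntegral

lemma chebForm_apply (f g : ℝ[X]) : chebForm f g = chebInner f g := by
  simp [chebForm, measureTIntegral, chebInner_eq_integral_measureT]

lemma chebInner_chebT_chebT (m n : ℕ) :
    chebInner (chebT m) (chebT n) = if m = n then π / 2 * cCoef m else 0 := by
  rw [chebInner_eq_integral_measureT, chebT, chebT]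
  split_ifs with h
  · subst h
    rcases eq_or_ne m 0 with rfl | hm
    · simpa [cCoef] using integral_eval_T_real_mul_self_measureT_zero
    · simp [cCoef, hm, integral_T_real_mul_self_measureT_of_ne_zero hm]
  · exact integral_eval_T_real_mul_eval_T_real_measureT_of_ne h

lemma chebInner_shenD_shenB (j k : ℕ) :
    chebInner (shenD j) (shenB k) =
      chebInner (chebT j) (chebT k)
        - 2 * ((k : ℝ) + 2) / ((k : ℝ) + 3) * chebInner (chebT j) (chebT (k + 2))
        + ((k : ℝ) + 1) / ((k : ℝ) + 3) * chebInner (chebT j) (chebT (k + 4))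
        - chebInner (chebT (j + 2)) (chebT k)
        + 2 * ((k : ℝ) + 2) / ((k : ℝ) + 3) * chebInner (chebT (j + 2)) (chebT (k + 2))
        - ((k : ℝ) + 1) / ((k : ℝ) + 3) * chebInner (chebT (j + 2)) (chebT (k + 4)) := by
  simp only [← chebForm_apply, shenD, shenB, C_mul', map_sub, map_add, map_smul,
    LinearMap.sub_apply, smul_eq_mul]
  ring

lemma cCoef_add_two (k : ℕ) : cCoef (k + 2) = 1 := if_neg (by omega)

/-- The mixed mass matrix `M̃_{kj} = ⟨φ̂_j, φ̃_k⟩_σ`: it is zero except on the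
diagonals `j = k−2, k, k+2, k+4`, where it takes the stated values. -/
theorem shen_mixed_mass_matrix :
    -- j = k − 2 (stated with row index k+2): M̃_{k+2,k} = −π/2
    (∀ k : ℕ, chebInner (shenD k) (shenB (k + 2)) = -(Real.pi / 2)) ∧
    -- j = k: M̃_{kk} = (π/2)(c_k + 2(k+2)/(k+3))
    (∀ k : ℕ, chebInner (shenD k) (shenB k) =
      Real.pi / 2 * (cCoef k + 2 * ((k : ℝ) + 2) / ((k : ℝ) + 3))) ∧
    -- j = k + 2: M̃_{k,k+2} = −(π/2)(2(k+2)/(k+3) + (k+1)/(k+3))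
    (∀ k : ℕ, chebInner (shenD (k + 2)) (shenB k) =
      -(Real.pi / 2) * (2 * ((k : ℝ) + 2) / ((k : ℝ) + 3) + ((k : ℝ) + 1) / ((k : ℝ) + 3))) ∧
    -- j = k + 4: M̃_{k,k+4} = (π/2)(k+1)/(k+3)
    (∀ k : ℕ, chebInner (shenD (k + 4)) (shenB k) =
      Real.pi / 2 * (((k : ℝ) + 1) / ((k : ℝ) + 3))) ∧
    -- otherwise zero
    (∀ j k : ℕ, k ≠ j + 2 → j ≠ k → j ≠ k + 2 → j ≠ k + 4 →
      chebInner (shenD j) (shenB k) = 0) := by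
  refine ⟨fun k => ?_, fun k => ?_, fun k => ?_, fun k => ?_, fun j k h₁ h₂ h₃ h₄ => ?_⟩ <;>
    simp only [chebInner_shenD_shenB, chebInner_chebT_chebT]
  · simp [cCoef_add_two, add_assoc]
  · simp [cCoef_add_two]
    ring
  · simp [cCoef_add_two, add_assoc]
    ring
  · simp [cCoef_add_two, add_assoc]
    ring
  · simp [h₂, h₃, h₄, h₁.symm]
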